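/- Let f : X × U → X satisfy d(f(x₁,u), f(x₂,u)) ≤ L_x·d(x₁,x₂) for all x₁, x₂, u, with L_x > 0. Suppose B(z, σ) ⊆ C(x_T, ε) (every state in B(z,σ) is ε-controllable to x_T), and (x_i, u_i, x_i') is a sample with f(x_i, u_i) = x_i' and x_i' ∈ B(z, σ). Then B(x_i, (σ − d(x_i', z))/L_x) ⊆ C(x_T, ε). -/

import Mathlib

def Reaches {X U : Type*} (f : X → U → X) (x y : X) : Prop :=
  ∃ l : List U, l.foldl f x = y

def ctrlSet {X U : Type*} [MetricSpace X] (f : X → U → X) (xT : X) (ε : ℝ) : Set X :=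
  {x | ∃ z ∈ Metric.closedBall xT ε, Reaches f x z}

theorem Reaches.cons {X U : Type*} {f : X → U → X} {x y : X} (u : U)
    (h : Reaches f (f x u) y) : Reaches f x y :=
  let ⟨l, hl⟩ := h
  ⟨u :: l, hl⟩

theorem mem_ctrlSet_of_step_mem {X U : Type*} [MetricSpace X] {f : X → U → X} {xT : X} {ε : ℝ}
    {x : X} (u : U) (h : f x u ∈ ctrlSet f xT ε) : x ∈ ctrlSet f xT ε :=
  let ⟨w, hw, hreach⟩ := h
  ⟨w, hw, hreach.cons u⟩

theorem backprop_subset_general {X U : Type*} [MetricSpace X] (f : X → U → X)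
    (Lx : ℝ) (hLx : 0 < Lx)
    (hLip : ∀ (x₁ x₂ : X) (u : U), dist (f x₁ u) (f x₂ u) ≤ Lx * dist x₁ x₂)
    (xT z : X) (σ ε : ℝ)
    (hball : Metric.closedBall z σ ⊆ ctrlSet f xT ε)
    (xi : X) (ui : U) (xi' : X)
    (hsample : f xi ui = xi') :
    Metric.closedBall xi ((σ - dist xi' z) / Lx) ⊆ ctrlSet f xT ε := by
  have hLipschitz : LipschitzWith ⟨Lx, hLx.le⟩ (f · ui) :=
    LipschitzWith.of_dist_le_mul fun x₁ x₂ => hLip x₁ x₂ ui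
  have hmaps : Set.MapsTo (f · ui) (Metric.closedBall xi ((σ - dist xi' z) / Lx))
      (Metric.closedBall xi' (σ - dist xi' z)) := by
    have h : Set.MapsTo (f · ui) _ (Metric.closedBall (f xi ui) (Lx * ((σ - dist xi' z) / Lx))) :=
      hLipschitz.mapsTo_closedBall xi _
    rwa [mul_div_cancel₀ _ hLx.ne', hsample] at h
  have hinner : Metric.closedBall xi' (σ - dist xi' z) ⊆ Metric.closedBall z σ :=
    Metric.closedBall_subset_closedBall' (by linarith)
  exact fun x hx => mem_ctrlSet_of_step_mem ui (hball (hinner (hmaps hx)))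

theorem backprop_subset {X U : Type*} [MetricSpace X] (f : X → U → X)
    (Lx : ℝ) (hLx : 0 < Lx)
    (hLip : ∀ (x₁ x₂ : X) (u : U), dist (f x₁ u) (f x₂ u) ≤ Lx * dist x₁ x₂)
    (xT z : X) (σ ε : ℝ)
    (hball : Metric.closedBall z σ ⊆ ctrlSet f xT ε)
    (xi : X) (ui : U) (xi' : X)
    (hsample : f xi ui = xi') (hmem : xi' ∈ Metric.closedBall z σ) :
    Metric.closedBall xi ((σ - dist xi' z) / Lx) ⊆ ctrlSet f xT ε :=
  backprop_subset_general f Lx hLx hLip xT z σ ε hball xi ui xi' hsample
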